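/- arXiv:2504.14499 — 3 statements merged into one kernel-verified Lean document; each statement's English description precedes it below -/
import Mathlib

section
/- For a 2×2 unitary matrix W with eigenvalues λ₁, λ₂ on the unit circle, 0 lies in the convex hull of {λ₁, λ₂} if and only if λ₁ + λ₂ = 0 (equivalently Tr W = 0). Hence for qubit unitaries U₁, U₂, perfect distinguishability with a product probe is equivalent to perfect distinguishability with a maximally entangled probe. -/
open Matrix Kronecker

theorem part1 (lam₁ lam₂ : ℂ) (h1 : ‖lam₁‖ = 1) (h2 : ‖lam₂‖ = 1) :
    ((0 : ℂ) ∈ convexHull ℝ ({lam₁, lam₂} : Set ℂ) ↔ lam₁ + lam₂ = 0) := by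
  rw [convexHull_pair, segment_eq_image]
  constructor
  · rintro ⟨t, ⟨ht0, ht1⟩, ht⟩
    simp only [Complex.real_smul] at ht
    have habs : ‖(((1 - t : ℝ) : ℂ) * lam₁)‖ = ‖(((t : ℝ) : ℂ) * lam₂)‖ := by
      have h : (((1 - t : ℝ) : ℂ) * lam₁) = -(((t : ℝ) : ℂ) * lam₂) := by
        push_cast at ht ⊢; linear_combination ht
      rw [h, norm_neg]
    rw [norm_mul, norm_mul, h1, h2, Complex.norm_real, Complex.norm_real, Real.norm_eq_abs, Real.norm_eq_abs,
      abs_of_nonneg (by linarith), abs_of_nonneg ht0, mul_one, mul_one] at habs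
    have htt : t = 1/2 := by linarith
    subst htt
    push_cast at ht
    linear_combination 2 * ht
  · intro h
    refine ⟨1/2, by norm_num, ?_⟩
    simp only [Complex.real_smul]
    push_cast
    linear_combination (1/2 : ℂ) * h

lemma aux_V (x y : ℂ) (hn : (starRingEnd ℂ) x * x + (starRingEnd ℂ) y * y = 1) :
    (!![x, -(starRingEnd ℂ) y; y, (starRingEnd ℂ) x] : Matrix (Fin 2) (Fin 2) ℂ)
      ∈ Matrix.unitaryGroup (Fin 2) ℂ := by
  rw [Matrix.mem_unitaryGroup_iff']
  ext i j
  fin_cases i <;> fin_cases j <;>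
    simp [Matrix.mul_apply, Fin.sum_univ_two, Matrix.star_apply, Matrix.one_apply, Complex.star_def] <;>
    first | ring1 | exact hn | exact show y * (starRingEnd ℂ) y + x * (starRingEnd ℂ) x = 1 by linear_combination hn

lemma key_mp (W : Matrix (Fin 2) (Fin 2) ℂ) (hW : W ∈ Matrix.unitaryGroup (Fin 2) ℂ)
    (ψ : Fin 2 → ℂ) (hnorm : ∑ i, ‖ψ i‖ ^ 2 = 1)
    (hQ : star ψ ⬝ᵥ W.mulVec ψ = 0) : W.trace = 0 := by
  have hn : (starRingEnd ℂ) (ψ 0) * (ψ 0) + (starRingEnd ℂ) (ψ 1) * (ψ 1) = 1 := by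
    have h0 : (starRingEnd ℂ) (ψ 0) * (ψ 0) = ((‖ψ 0‖^2 : ℝ) : ℂ) := by
      rw [mul_comm, Complex.mul_conj']; norm_cast
    have h1 : (starRingEnd ℂ) (ψ 1) * (ψ 1) = ((‖ψ 1‖^2 : ℝ) : ℂ) := by
      rw [mul_comm, Complex.mul_conj']; norm_cast
    rw [h0, h1, ← Complex.ofReal_add]
    rw [Fin.sum_univ_two] at hnorm
    rw [hnorm, Complex.ofReal_one]
  simp only [dotProduct, mulVec, Fin.sum_univ_two, Pi.star_apply, RCLike.star_def] at hQ
  set V : Matrix (Fin 2) (Fin 2) ℂ :=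
    !![ψ 0, -(starRingEnd ℂ) (ψ 1); ψ 1, (starRingEnd ℂ) (ψ 0)] with hV
  have hVmem : V ∈ Matrix.unitaryGroup (Fin 2) ℂ := aux_V _ _ hn
  set M : Matrix (Fin 2) (Fin 2) ℂ := star V * W * V with hMdef
  have hMmem : M ∈ Matrix.unitaryGroup (Fin 2) ℂ :=
    mul_mem (mul_mem (Unitary.star_mem hVmem) hW) hVmem
  have hM00 : M 0 0 = 0 := by
    simp only [hMdef, Matrix.mul_apply, Fin.sum_univ_two, Matrix.star_apply, RCLike.star_def, hV]
    simp
    linear_combination hQ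
  have h1 : (starRingEnd ℂ) (M 1 0) * M 1 0 = 1 := by
    have := congrFun (congrFun hMmem.1 0) 0
    simp only [Matrix.mul_apply, Fin.sum_univ_two, Matrix.star_apply, RCLike.star_def,
      Matrix.one_apply_eq] at this
    rw [hM00] at this
    linear_combination this
  have hM11 : M 1 1 = 0 := by
    have h2 := congrFun (congrFun hMmem.2 1) 1
    simp only [Matrix.mul_apply, Fin.sum_univ_two, Matrix.star_apply, RCLike.star_def,
      Matrix.one_apply_eq] at h2
    have h3 : M 1 1 * (starRingEnd ℂ) (M 1 1) = 0 := by linear_combination h2 - h1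
    rw [Complex.mul_conj] at h3
    norm_cast at h3
    exact Complex.normSq_eq_zero.mp h3
  have htr : W.trace = M.trace := by
    rw [hMdef, Matrix.trace_mul_cycle]
    rw [hVmem.2, one_mul]
  rw [htr, Matrix.trace_fin_two, hM00, hM11, add_zero]

lemma key_mpr (W : Matrix (Fin 2) (Fin 2) ℂ) (hW : W ∈ Matrix.unitaryGroup (Fin 2) ℂ)
    (ht : W.trace = 0) :
    ∃ ψ : Fin 2 → ℂ, (∑ i, ‖ψ i‖ ^ 2 = 1) ∧ star ψ ⬝ᵥ W.mulVec ψ = 0 := by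
  have htr : W 0 0 + W 1 1 = 0 := by rw [Matrix.trace_fin_two] at ht; exact ht
  have h01 : (starRingEnd ℂ) (W 0 0) * W 0 1 + (starRingEnd ℂ) (W 1 0) * W 1 1 = 0 := by
    have h := congrFun (congrFun hW.1 0) 1
    simpa [Matrix.mul_apply, Fin.sum_univ_two, Matrix.star_apply, Matrix.one_apply,
      Complex.star_def] using h
  by_cases ha : W 0 0 = 0
  · refine ⟨![1, 0], by simp [Fin.sum_univ_two], ?_⟩
    simp [dotProduct, mulVec, Fin.sum_univ_two, ha]
  · by_cases hc : W 1 0 = 0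
    · -- c = 0 hence b = 0
      have hb : W 0 1 = 0 := by
        rw [hc] at h01
        simp at h01
        rcases h01 with h | h
        · exact absurd ((starRingEnd ℂ).injective (by simpa using h)) ha
        · exact h
      refine ⟨![((Real.sqrt 2)⁻¹ : ℝ), ((Real.sqrt 2)⁻¹ : ℝ)], ?_, ?_⟩
      · have h2 : (0:ℝ) < Real.sqrt 2 := Real.sqrt_pos.mpr (by norm_num)
        simp [Fin.sum_univ_two, Complex.norm_real, abs_of_nonneg (le_of_lt (inv_pos.mpr h2))]
        norm_num
      · simp [dotProduct, mulVec, Fin.sum_univ_two, hb, hc, Complex.conj_ofReal]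
        ring_nf
        linear_combination ((Real.sqrt 2 : ℂ))⁻¹^2 * htr
    · -- a ≠ 0, c ≠ 0
      set s : ℝ := (Real.sqrt 2 * (‖W 0 0‖ * ‖W 1 0‖))⁻¹ with hs
      have hk : (0:ℝ) < ‖W 0 0‖ * ‖W 1 0‖ :=
        mul_pos (norm_pos_iff.mpr ha) (norm_pos_iff.mpr hc)
      have hs0 : (0:ℝ) < s := by
        rw [hs]
        exact inv_pos.mpr (mul_pos (Real.sqrt_pos.mpr (by norm_num)) hk)
      have haA : W 0 0 * (starRingEnd ℂ) (W 0 0) = ((‖W 0 0‖:ℝ):ℂ)^2 := by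
        rw [Complex.mul_conj']
      have hcC : W 1 0 * (starRingEnd ℂ) (W 1 0) = ((‖W 1 0‖:ℝ):ℂ)^2 := by
        rw [Complex.mul_conj']
      refine ⟨![(s:ℂ) * ((‖W 0 0‖ * ‖W 1 0‖ : ℝ):ℂ),
               (s:ℂ) * (Complex.I * (starRingEnd ℂ) (W 0 0) * W 1 0)], ?_, ?_⟩
      · have hn1 : ‖((s:ℝ):ℂ) * ((‖W 0 0‖ * ‖W 1 0‖ : ℝ):ℂ)‖ = s * (‖W 0 0‖ * ‖W 1 0‖) := by
          rw [norm_mul, Complex.norm_real, Complex.norm_real, Real.norm_eq_abs,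
            Real.norm_eq_abs, abs_of_pos hs0, abs_of_pos hk]
        have hn2 : ‖((s:ℝ):ℂ) * (Complex.I * (starRingEnd ℂ) (W 0 0) * W 1 0)‖
            = s * (‖W 0 0‖ * ‖W 1 0‖) := by
          rw [norm_mul, Complex.norm_real, Real.norm_eq_abs, abs_of_pos hs0, norm_mul, norm_mul,
            Complex.norm_I, one_mul, RCLike.norm_conj]
        rw [Fin.sum_univ_two]
        simp only [Matrix.cons_val_zero, Matrix.cons_val_one, Matrix.head_cons]
        rw [hn1, hn2]
        rw [hs]
        rw [mul_inv, inv_mul_cancel_right₀ (ne_of_gt hk)]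
        rw [← Real.sqrt_inv, Real.sq_sqrt (by norm_num)]
        norm_num
      · simp only [dotProduct, mulVec, Fin.sum_univ_two, Pi.star_apply, RCLike.star_def,
          Matrix.cons_val_zero, Matrix.cons_val_one, Matrix.head_cons, _root_.map_mul,
          Complex.conj_ofReal, Complex.conj_conj, Complex.conj_I]
        push_cast
        linear_combination ((s:ℂ)^2*(((‖W 0 0‖:ℝ):ℂ)^2*((‖W 1 0‖:ℝ):ℂ)^2
            - ((‖W 0 0‖:ℝ):ℂ)*((‖W 1 0‖:ℝ):ℂ)*Complex.I*((‖W 1 0‖:ℝ):ℂ)^2)) * htr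
          + ((s:ℂ)^2*((‖W 0 0‖:ℝ):ℂ)*((‖W 1 0‖:ℝ):ℂ)*Complex.I*(W 1 0)) * h01
          + ((s:ℂ)^2*(W 1 0)*((starRingEnd ℂ) (W 1 0))*(W 1 1)) * haA
          + ((s:ℂ)^2*(((‖W 0 0‖:ℝ):ℂ)^2*(W 1 1) - ((‖W 0 0‖:ℝ):ℂ)*((‖W 1 0‖:ℝ):ℂ)*Complex.I*(W 0 0)
            - ((‖W 0 0‖:ℝ):ℂ)*((‖W 1 0‖:ℝ):ℂ)*Complex.I*(W 1 1))) * hcC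
          + (-((s:ℂ)^2 * W 0 0 * (starRingEnd ℂ) (W 0 0) * W 1 0 * (starRingEnd ℂ) (W 1 0) * W 1 1)) * Complex.I_sq

/-- For `λ₁, λ₂` on the unit circle, `0 ∈ conv{λ₁, λ₂}` iff
`λ₁ + λ₂ = 0`.  Hence for qubit unitaries `U₁, U₂`, perfect distinguishability
with a product probe is equivalent to perfect distinguishability with a maximally
entangled probe, i.e. to `Tr(U₁ᴴU₂) = 0`. -/
theorem stmt10 :
    (∀ lam₁ lam₂ : ℂ, ‖lam₁‖ = 1 → ‖lam₂‖ = 1 →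
      ((0 : ℂ) ∈ convexHull ℝ ({lam₁, lam₂} : Set ℂ) ↔ lam₁ + lam₂ = 0)) ∧
    (∀ U₁ U₂ : Matrix (Fin 2) (Fin 2) ℂ,
      U₁ ∈ Matrix.unitaryGroup (Fin 2) ℂ → U₂ ∈ Matrix.unitaryGroup (Fin 2) ℂ →
      ((∃ ψ : Fin 2 → ℂ, (∑ i, ‖ψ i‖ ^ 2 = 1) ∧
          star ψ ⬝ᵥ (U₁ᴴ * U₂).mulVec ψ = 0)
        ↔ (U₁ᴴ * U₂).trace = 0)) := by
  refine ⟨part1, ?_⟩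
  intro U₁ U₂ h1 h2
  have hW : U₁ᴴ * U₂ ∈ Matrix.unitaryGroup (Fin 2) ℂ := by
    rw [← Matrix.star_eq_conjTranspose]
    exact mul_mem (Unitary.star_mem h1) h2
  exact ⟨fun ⟨ψ, hn, hq⟩ => key_mp _ hW ψ hn hq, key_mpr _ hW⟩
end

section
/- Let T₁ = I, T₂ = diag(1, e^{2πi/3}, e^{4πi/3}), T₃ = diag(1, 1, -1) be unitaries on ℂ³. There is no unit vector ζ ∈ ℂ³ ⊗ ℂ³ with both ⟨ζ|(T₁†T₂ ⊗ I)|ζ⟩ = 0 and ⟨ζ|(T₁†T₃ ⊗ I)|ζ⟩ = 0. That is, no common probe perfectly distinguishes both the pair {T₁,T₂} and the pair {T₁,T₃}. -/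
open Matrix Kronecker

lemma key11 (ζ : Fin 3 × Fin 3 → ℂ) (d : Fin 3 → ℂ)
    (h : star ζ ⬝ᵥ ((Matrix.diagonal d ⊗ₖ (1 : Matrix (Fin 3) (Fin 3) ℂ)).mulVec ζ) = 0) :
    d 0 * ((Complex.normSq (ζ (0,0)) + Complex.normSq (ζ (0,1)) + Complex.normSq (ζ (0,2)) : ℝ) : ℂ)
    + d 1 * ((Complex.normSq (ζ (1,0)) + Complex.normSq (ζ (1,1)) + Complex.normSq (ζ (1,2)) : ℝ) : ℂ)
    + d 2 * ((Complex.normSq (ζ (2,0)) + Complex.normSq (ζ (2,1)) + Complex.normSq (ζ (2,2)) : ℝ) : ℂ) = 0 := by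
  simp only [dotProduct, mulVec, Fintype.sum_prod_type, Fin.sum_univ_three,
    Matrix.kroneckerMap_apply, Matrix.one_apply, Matrix.diagonal_apply, Pi.star_apply] at h
  simp at h
  push_cast [Complex.normSq_eq_conj_mul_self]
  linear_combination h

/-- For the qutrit unitaries `T₁ = I`,
`T₂ = diag(1, e^{2πi/3}, e^{4πi/3})`, `T₃ = diag(1, 1, -1)`, there is no unit vector
`ζ ∈ ℂ³ ⊗ ℂ³` with both `⟨ζ|(T₁ᴴT₂ ⊗ I)|ζ⟩ = 0` and `⟨ζ|(T₁ᴴT₃ ⊗ I)|ζ⟩ = 0`: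
no common probe perfectly distinguishes both pairs `{T₁,T₂}` and `{T₁,T₃}`. -/
theorem stmt11 :
    ¬ ∃ ζ : Fin 3 × Fin 3 → ℂ, (∑ p, ‖ζ p‖ ^ 2 = 1) ∧
      star ζ ⬝ᵥ
        ((((1 : Matrix (Fin 3) (Fin 3) ℂ)ᴴ *
            Matrix.diagonal ![1, Complex.exp (2 * (Real.pi : ℂ) * Complex.I / 3),
              Complex.exp (4 * (Real.pi : ℂ) * Complex.I / 3)]) ⊗ₖ
          (1 : Matrix (Fin 3) (Fin 3) ℂ)).mulVec ζ) = 0 ∧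
      star ζ ⬝ᵥ
        ((((1 : Matrix (Fin 3) (Fin 3) ℂ)ᴴ *
            Matrix.diagonal ![1, 1, -1]) ⊗ₖ
          (1 : Matrix (Fin 3) (Fin 3) ℂ)).mulVec ζ) = 0 := by
  rintro ⟨ζ, hnorm, h1, h2⟩
  rw [Matrix.conjTranspose_one, Matrix.one_mul] at h1 h2
  have H1 := key11 ζ _ h1
  have H2 := key11 ζ _ h2
  set a : ℝ := Complex.normSq (ζ (0,0)) + Complex.normSq (ζ (0,1)) + Complex.normSq (ζ (0,2)) with ha
  set b : ℝ := Complex.normSq (ζ (1,0)) + Complex.normSq (ζ (1,1)) + Complex.normSq (ζ (1,2)) with hb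
  set c : ℝ := Complex.normSq (ζ (2,0)) + Complex.normSq (ζ (2,1)) + Complex.normSq (ζ (2,2)) with hc
  simp only [Matrix.cons_val_zero, Matrix.cons_val_one, Matrix.head_cons, Matrix.cons_val_two,
    Matrix.tail_cons, one_mul] at H1 H2
  -- norm condition
  have hsum : a + b + c = 1 := by
    rw [ha, hb, hc]
    have := hnorm
    simp only [Fintype.sum_prod_type, Fin.sum_univ_three,
      Complex.sq_norm] at this
    linarith
  -- second condition gives a + b - c = 0
  have e4 : a + b - c = 0 := by
    have : ((a + b - c : ℝ) : ℂ) = 0 := by push_cast; linear_combination H2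
    exact_mod_cast this
  -- rewrite exponentials
  have hω : Complex.exp (2 * (Real.pi : ℂ) * Complex.I / 3)
      = Complex.exp (((2*Real.pi/3 : ℝ) : ℂ) * Complex.I) := by
    congr 1; push_cast; ring
  have hω2 : Complex.exp (4 * (Real.pi : ℂ) * Complex.I / 3)
      = Complex.exp (((4*Real.pi/3 : ℝ) : ℂ) * Complex.I) := by
    congr 1; push_cast; ring
  have hcos1 : Real.cos (2*Real.pi/3) = -(1/2) := by
    rw [show (2*Real.pi/3 : ℝ) = Real.pi - Real.pi/3 by ring, Real.cos_pi_sub,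
      Real.cos_pi_div_three]
  have hsin1 : Real.sin (2*Real.pi/3) = Real.sqrt 3 / 2 := by
    rw [show (2*Real.pi/3 : ℝ) = Real.pi - Real.pi/3 by ring, Real.sin_pi_sub,
      Real.sin_pi_div_three]
  have hcos2 : Real.cos (4*Real.pi/3) = -(1/2) := by
    rw [show (4*Real.pi/3 : ℝ) = Real.pi + Real.pi/3 by ring]
    simp [Real.cos_add, Real.cos_pi_div_three]
  have hsin2 : Real.sin (4*Real.pi/3) = -(Real.sqrt 3 / 2) := by
    rw [show (4*Real.pi/3 : ℝ) = Real.pi + Real.pi/3 by ring]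
    simp [Real.sin_add, Real.sin_pi_div_three]
  rw [hω, hω2] at H1
  have hre := congrArg Complex.re H1
  have him := congrArg Complex.im H1
  simp only [Complex.add_re, Complex.add_im, Complex.mul_re, Complex.mul_im,
    Complex.ofReal_re, Complex.ofReal_im, Complex.one_re, Complex.one_im,
    Complex.exp_ofReal_mul_I_re, Complex.exp_ofReal_mul_I_im, Complex.zero_re, Complex.zero_im,
    hcos1, hsin1, hcos2, hsin2] at hre him
  have h3 : (0:ℝ) < Real.sqrt 3 := Real.sqrt_pos.mpr (by norm_num)
  have hbc : b = c := by
    have : Real.sqrt 3 * (b - c) = 0 := by linear_combination 2 * him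
    rcases mul_eq_zero.mp this with h | h
    · exact absurd h (ne_of_gt h3)
    · linarith
  linarith [hre]
end

section
/- With the 2d unitaries W_m on ℂ^d defined as in the previous context (d ≥ 3), Tr(W₁† W_{d+1}) = d − 2 ≠ 0; hence the pair W₁, W_{d+1} is not perfectly distinguishable with any maximally entangled probe. -/
open Matrix Kronecker

/-- The `2d` unitaries of Theorem 6 of the paper (sign bit `b`, shift `k`),
built from an orthonormal basis `φ` of `ℂ^d`:
`W (false, k) = ∑ᵢ |φ_{i+k}⟩⟨i|`, `W (true, k) = -|φ_k⟩⟨0| + ∑_{i≠0} |φ_{i+k}⟩⟨i|`. -/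
def Wmat (d : ℕ) [NeZero d] (φv : Fin d → (Fin d → ℂ)) (b : Bool) (k : Fin d) :
    Matrix (Fin d) (Fin d) ℂ :=
  Matrix.of fun i j => (if b = true ∧ j = 0 then -1 else 1) * φv (j + k) i

/-- For `d ≥ 3` and an orthonormal basis `φ`,
`Tr(W₁ᴴ W_{d+1}) = d - 2 ≠ 0` (here `W₁ = Wmat d φ false 0` and
`W_{d+1} = Wmat d φ true 0`); hence this pair is not perfectly distinguishable
with any maximally entangled probe. -/
theorem stmt16 (d : ℕ) [NeZero d] (hd : 3 ≤ d) (φv : Fin d → (Fin d → ℂ))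
    (horth : ∀ i j, star (φv i) ⬝ᵥ φv j = if i = j then 1 else 0) :
    ((Wmat d φv false 0)ᴴ * Wmat d φv true 0).trace = (d : ℂ) - 2 ∧
    ((Wmat d φv false 0)ᴴ * Wmat d φv true 0).trace ≠ 0 := by
  have key : ((Wmat d φv false 0)ᴴ * Wmat d φv true 0).trace = (d : ℂ) - 2 := by
    have htr : ((Wmat d φv false 0)ᴴ * Wmat d φv true 0).trace
        = ∑ j : Fin d, (if j = 0 then (-1 : ℂ) else 1) * (star (φv j) ⬝ᵥ φv j) := by
      simp only [Matrix.trace, Matrix.diag, Matrix.mul_apply, Matrix.conjTranspose_apply,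
        Wmat, Matrix.of_apply, dotProduct, Pi.star_apply]
      refine Finset.sum_congr rfl fun j _ => ?_
      rw [Finset.mul_sum]
      refine Finset.sum_congr rfl fun i _ => ?_
      simp only [Bool.false_eq_true, false_and, if_false, star_mul', star_one, one_mul,
        true_and, add_zero]
      ring
    rw [htr]
    have : ∀ j : Fin d, (if j = 0 then (-1 : ℂ) else 1) * (star (φv j) ⬝ᵥ φv j)
        = if j = 0 then (-1 : ℂ) else 1 := by
      intro j; rw [horth j j, if_pos rfl, mul_one]
    rw [Finset.sum_congr rfl fun j _ => this j]
    have h2 : ∀ j : Fin d, (if j = 0 then (-1 : ℂ) else 1) = 1 + if j = 0 then (-2:ℂ) else 0 := by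
      intro j; by_cases h : j = 0 <;> simp [h]; norm_num
    rw [Finset.sum_congr rfl fun j _ => h2 j, Finset.sum_add_distrib,
      Finset.sum_ite_eq' Finset.univ (0 : Fin d) (fun _ => (-2:ℂ))]
    simp
    ring
  refine ⟨key, key ▸ ?_⟩
  intro h
  have : (d : ℂ) = 2 := by linear_combination h
  have : (d : ℕ) = 2 := by exact_mod_cast this
  omega
end
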